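/- arXiv:2309.04253 — 11 statements merged into one kernel-verified Lean document; each statement's English description precedes it below -/
import Mathlib

section
/- Let L : ℝ × ℝ → ℝ be a C² function of variables (S,P), defined on an open set where P ≠ 0, satisfying the self-duality equation L_S² − (2S/P)·L_S·L_P − L_P² = 1 identically. Define Θ(S,P) = 4(L − P·L_P − S·L_S) and T²(S,P) = 4(S²+P²)·L_S² + 4(L − P·L_P − S·L_S)². Then the Jacobian determinant ∂(Θ,T²)/∂(S,P) = Θ_S·(T²)_P − Θ_P·(T²)_S vanishes identically on this set. -/
/-!
Write a = L_S, b = L_P and c, d, e for L_SS, L_SP, L_PP. The gradient of Θ = 4(L - P b - S a)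
is -4 (P d + S c, P e + S d), and T² = 4 (S² + P²) a² + Θ²/4, whose second summand contributes
nothing to the Jacobian. Hence the Jacobian is
-32 a ((P d + S c)(P a + (S² + P²) d) - (P e + S d)(S a + (S² + P²) c)).
Differentiating the self-duality equation in S and in P gives two relations, linear in c, d, e,
and the expression above times S² + P² is a combination of them.
-/

open Topology Function

noncomputable section

namespace DualityInvariant

def partial₁ (g : ℝ → ℝ → ℝ) (S P : ℝ) : ℝ := deriv (fun s => g s P) S

def partial₂ (g : ℝ → ℝ → ℝ) (S P : ℝ) : ℝ := deriv (fun t => g S t) P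

def jacobian (f g : ℝ → ℝ → ℝ) (S P : ℝ) : ℝ :=
  partial₁ f S P * partial₂ g S P - partial₂ f S P * partial₁ g S P

def selfDuality (L : ℝ → ℝ → ℝ) (S P : ℝ) : ℝ :=
  partial₁ L S P ^ 2 - (2 * S / P) * partial₁ L S P * partial₂ L S P - partial₂ L S P ^ 2

def stressTrace (L : ℝ → ℝ → ℝ) (S P : ℝ) : ℝ :=
  4 * (L S P - P * partial₂ L S P - S * partial₁ L S P)

def stressSq (L : ℝ → ℝ → ℝ) (S P : ℝ) : ℝ :=
  4 * (S ^ 2 + P ^ 2) * partial₁ L S P ^ 2 + stressTrace L S P ^ 2 / 4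

variable {g L : ℝ → ℝ → ℝ} {U : Set (ℝ × ℝ)} {S P : ℝ}

lemma hasDerivAt_partial₁ (h : DifferentiableAt ℝ (uncurry g) (S, P)) :
    HasDerivAt (fun s => g s P) (partial₁ g S P) S := by
  have hline : DifferentiableAt ℝ (fun s : ℝ => (s, P)) S := by fun_prop
  exact (h.comp S hline).hasDerivAt

lemma hasDerivAt_partial₂ (h : DifferentiableAt ℝ (uncurry g) (S, P)) :
    HasDerivAt (fun t => g S t) (partial₂ g S P) P := by
  have hline : DifferentiableAt ℝ (fun t : ℝ => (S, t)) P := by fun_prop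
  exact (h.comp P hline).hasDerivAt

lemma partial₁_eq_fderiv (h : DifferentiableAt ℝ (uncurry g) (S, P)) :
    partial₁ g S P = fderiv ℝ (uncurry g) (S, P) (1, 0) := by
  have hline : HasDerivAt (fun s : ℝ => (s, P)) (1, 0) S :=
    (hasDerivAt_id S).prodMk (hasDerivAt_const S P)
  exact (h.hasFDerivAt.comp_hasDerivAt S hline).deriv

lemma partial₂_eq_fderiv (h : DifferentiableAt ℝ (uncurry g) (S, P)) :
    partial₂ g S P = fderiv ℝ (uncurry g) (S, P) (0, 1) := by
  have hline : HasDerivAt (fun t : ℝ => (S, t)) (0, 1) P :=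
    (hasDerivAt_const P S).prodMk (hasDerivAt_id P)
  exact (h.hasFDerivAt.comp_hasDerivAt P hline).deriv

lemma partial₁_eq_zero_of_forall_eq {k : ℝ} (hU : IsOpen U) (hg : ∀ q ∈ U, g q.1 q.2 = k)
    (hp : (S, P) ∈ U) : partial₁ g S P = 0 := by
  have hline : (fun s => g s P) =ᶠ[𝓝 S] fun _ => k := by
    filter_upwards [(continuous_id.prodMk continuous_const).continuousAt.preimage_mem_nhds
      (hU.mem_nhds hp)] with s hs using hg (s, P) hs
  exact hline.deriv_eq.trans (deriv_const S k)

lemma partial₂_eq_zero_of_forall_eq {k : ℝ} (hU : IsOpen U) (hg : ∀ q ∈ U, g q.1 q.2 = k)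
    (hp : (S, P) ∈ U) : partial₂ g S P = 0 := by
  have hline : (fun t => g S t) =ᶠ[𝓝 P] fun _ => k := by
    filter_upwards [(continuous_const.prodMk continuous_id).continuousAt.preimage_mem_nhds
      (hU.mem_nhds hp)] with t ht using hg (S, t) ht
  exact hline.deriv_eq.trans (deriv_const P k)

lemma eqOn_uncurry_partial₁ (hU : IsOpen U) (hg : DifferentiableOn ℝ (uncurry g) U) :
    Set.EqOn (uncurry (partial₁ g)) (fun q => fderiv ℝ (uncurry g) q (1, 0)) U :=
  fun _ hq => partial₁_eq_fderiv (hg.differentiableAt (hU.mem_nhds hq))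

lemma eqOn_uncurry_partial₂ (hU : IsOpen U) (hg : DifferentiableOn ℝ (uncurry g) U) :
    Set.EqOn (uncurry (partial₂ g)) (fun q => fderiv ℝ (uncurry g) q (0, 1)) U :=
  fun _ hq => partial₂_eq_fderiv (hg.differentiableAt (hU.mem_nhds hq))

lemma contDiffOn_uncurry_partial₁ {n : WithTop ℕ∞} (hU : IsOpen U)
    (hg : ContDiffOn ℝ (n + 1) (uncurry g) U) : ContDiffOn ℝ n (uncurry (partial₁ g)) U :=
  ((hg.fderiv_of_isOpen hU le_rfl).clm_apply contDiffOn_const).congr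
    (eqOn_uncurry_partial₁ hU (hg.differentiableOn (by simp)))

lemma contDiffOn_uncurry_partial₂ {n : WithTop ℕ∞} (hU : IsOpen U)
    (hg : ContDiffOn ℝ (n + 1) (uncurry g) U) : ContDiffOn ℝ n (uncurry (partial₂ g)) U :=
  ((hg.fderiv_of_isOpen hU le_rfl).clm_apply contDiffOn_const).congr
    (eqOn_uncurry_partial₂ hU (hg.differentiableOn (by simp)))

lemma partial₁_partial₂_eq (hU : IsOpen U) (hg : ContDiffOn ℝ 2 (uncurry g) U)
    (hp : (S, P) ∈ U) : partial₁ (partial₂ g) S P = partial₂ (partial₁ g) S P := by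
  have hmem := hU.mem_nhds hp
  have hg₁ : ContDiffOn ℝ (1 + 1) (uncurry g) U := hg
  have hD : DifferentiableAt ℝ (fderiv ℝ (uncurry g)) (S, P) :=
    ((hg₁.fderiv_of_isOpen hU le_rfl).contDiffAt hmem).differentiableAt one_ne_zero
  have hdiff := hg.differentiableOn two_ne_zero
  rw [partial₁_eq_fderiv ((contDiffOn_uncurry_partial₂ hU hg₁).differentiableOn one_ne_zero
      |>.differentiableAt hmem),
    partial₂_eq_fderiv ((contDiffOn_uncurry_partial₁ hU hg₁).differentiableOn one_ne_zero
      |>.differentiableAt hmem),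
    ((eqOn_uncurry_partial₂ hU hdiff).eventuallyEq_of_mem hmem).fderiv_eq,
    ((eqOn_uncurry_partial₁ hU hdiff).eventuallyEq_of_mem hmem).fderiv_eq,
    fderiv_clm_apply hD (differentiableAt_const _), fderiv_clm_apply hD (differentiableAt_const _)]
  simpa using ((hg.contDiffAt hmem).isSymmSndFDerivAt (by simp)) (1, 0) (0, 1)

lemma differentiableAt_uncurry_partials (hU : IsOpen U) (hL : ContDiffOn ℝ 2 (uncurry L) U)
    (hp : (S, P) ∈ U) :
    DifferentiableAt ℝ (uncurry L) (S, P) ∧ DifferentiableAt ℝ (uncurry (partial₁ L)) (S, P) ∧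
      DifferentiableAt ℝ (uncurry (partial₂ L)) (S, P) := by
  have hmem := hU.mem_nhds hp
  have hL₁ : ContDiffOn ℝ (1 + 1) (uncurry L) U := hL
  exact ⟨(hL.differentiableOn two_ne_zero).differentiableAt hmem,
    ((contDiffOn_uncurry_partial₁ hU hL₁).differentiableOn one_ne_zero).differentiableAt hmem,
    ((contDiffOn_uncurry_partial₂ hU hL₁).differentiableOn one_ne_zero).differentiableAt hmem⟩

lemma hasDerivAt_stressTrace₁ (hU : IsOpen U) (hL : ContDiffOn ℝ 2 (uncurry L) U)
    (hp : (S, P) ∈ U) :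
    HasDerivAt (fun s => stressTrace L s P)
      (-4 * (P * partial₂ (partial₁ L) S P + S * partial₁ (partial₁ L) S P)) S := by
  obtain ⟨h₀, h₁, h₂⟩ := differentiableAt_uncurry_partials hU hL hp
  have h := (((hasDerivAt_partial₁ h₀).sub ((hasDerivAt_partial₁ h₂).const_mul P)).sub
    ((hasDerivAt_id' S).mul (hasDerivAt_partial₁ h₁))).const_mul 4
  rw [partial₁_partial₂_eq hU hL hp] at h
  exact h.congr_deriv (by ring)

lemma hasDerivAt_stressTrace₂ (hU : IsOpen U) (hL : ContDiffOn ℝ 2 (uncurry L) U)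
    (hp : (S, P) ∈ U) :
    HasDerivAt (fun t => stressTrace L S t)
      (-4 * (P * partial₂ (partial₂ L) S P + S * partial₂ (partial₁ L) S P)) P := by
  obtain ⟨h₀, h₁, h₂⟩ := differentiableAt_uncurry_partials hU hL hp
  have h := (((hasDerivAt_partial₂ h₀).sub ((hasDerivAt_id' P).mul (hasDerivAt_partial₂ h₂))).sub
    ((hasDerivAt_partial₂ h₁).const_mul S)).const_mul 4
  exact h.congr_deriv (by ring)

lemma jacobian_stressTrace_stressSq (hU : IsOpen U) (hL : ContDiffOn ℝ 2 (uncurry L) U)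
    (hp : (S, P) ∈ U) :
    jacobian (stressTrace L) (stressSq L) S P =
      -32 * (partial₁ L S P *
        ((P * partial₂ (partial₁ L) S P + S * partial₁ (partial₁ L) S P)
            * (P * partial₁ L S P + (S ^ 2 + P ^ 2) * partial₂ (partial₁ L) S P)
          - (P * partial₂ (partial₂ L) S P + S * partial₂ (partial₁ L) S P)
            * (S * partial₁ L S P + (S ^ 2 + P ^ 2) * partial₁ (partial₁ L) S P))) := by
  obtain ⟨-, h₁, -⟩ := differentiableAt_uncurry_partials hU hL hp
  have hΘ₁ := hasDerivAt_stressTrace₁ hU hL hp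
  have hΘ₂ := hasDerivAt_stressTrace₂ hU hL hp
  have hT₁ : partial₁ (stressSq L) S P = _ :=
    (((((hasDerivAt_pow 2 S).add_const (P ^ 2)).const_mul 4).fun_mul
      ((hasDerivAt_partial₁ h₁).fun_pow 2)).add ((hΘ₁.fun_pow 2).div_const 4)).deriv
  have hT₂ : partial₂ (stressSq L) S P = _ :=
    (((((hasDerivAt_pow 2 P).const_add (S ^ 2)).const_mul 4).fun_mul
      ((hasDerivAt_partial₂ h₁).fun_pow 2)).add ((hΘ₂.fun_pow 2).div_const 4)).deriv
  have hΘ₁' : partial₁ (stressTrace L) S P = _ := hΘ₁.deriv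
  have hΘ₂' : partial₂ (stressTrace L) S P = _ := hΘ₂.deriv
  rw [jacobian, hΘ₁', hΘ₂', hT₁, hT₂]
  ring

lemma selfDuality_partial₁_relation (hU : IsOpen U) (hL : ContDiffOn ℝ 2 (uncurry L) U)
    (hp : (S, P) ∈ U) (hP : P ≠ 0) (hSD : ∀ q ∈ U, selfDuality L q.1 q.2 = 1) :
    partial₁ (partial₁ L) S P * (P * partial₁ L S P - S * partial₂ L S P) =
      partial₁ L S P * partial₂ L S P
        + partial₂ (partial₁ L) S P * (S * partial₁ L S P + P * partial₂ L S P) := by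
  obtain ⟨-, h₁, h₂⟩ := differentiableAt_uncurry_partials hU hL hp
  have hcoef : HasDerivAt (fun s : ℝ => 2 * s / P) (2 * 1 / P) S :=
    ((hasDerivAt_id' S).const_mul 2).div_const P
  have hderiv : partial₁ (selfDuality L) S P = _ :=
    (((hasDerivAt_partial₁ h₁).fun_pow 2).sub
      ((hcoef.fun_mul (hasDerivAt_partial₁ h₁)).fun_mul (hasDerivAt_partial₁ h₂))).sub
      ((hasDerivAt_partial₁ h₂).fun_pow 2) |>.deriv
  rw [partial₁_eq_zero_of_forall_eq hU hSD hp, partial₁_partial₂_eq hU hL hp] at hderiv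
  field_simp at hderiv
  linear_combination -hderiv / 2

lemma selfDuality_partial₂_relation (hU : IsOpen U) (hL : ContDiffOn ℝ 2 (uncurry L) U)
    (hp : (S, P) ∈ U) (hP : P ≠ 0) (hSD : ∀ q ∈ U, selfDuality L q.1 q.2 = 1) :
    P * partial₂ (partial₂ L) S P * (S * partial₁ L S P + P * partial₂ L S P) =
      S * partial₁ L S P * partial₂ L S P
        + P * partial₂ (partial₁ L) S P * (P * partial₁ L S P - S * partial₂ L S P) := by
  obtain ⟨-, h₁, h₂⟩ := differentiableAt_uncurry_partials hU hL hp
  have hcoef : HasDerivAt (fun t : ℝ => 2 * S / t) ((0 * P - 2 * S * 1) / P ^ 2) P :=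
    (hasDerivAt_const P (2 * S)).div (hasDerivAt_id' P) hP
  have hderiv : partial₂ (selfDuality L) S P = _ :=
    (((hasDerivAt_partial₂ h₁).fun_pow 2).sub
      ((hcoef.fun_mul (hasDerivAt_partial₂ h₁)).fun_mul (hasDerivAt_partial₂ h₂))).sub
      ((hasDerivAt_partial₂ h₂).fun_pow 2) |>.deriv
  rw [partial₂_eq_zero_of_forall_eq hU hSD hp] at hderiv
  field_simp at hderiv
  linear_combination hderiv / 2

lemma jacobian_factor_eq_zero_of_relations {S P a b c d e : ℝ} (hP : P ≠ 0)
    (h₁ : c * (P * a - S * b) = a * b + d * (S * a + P * b))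
    (h₂ : P * e * (S * a + P * b) = S * a * b + P * d * (P * a - S * b)) :
    a * ((P * d + S * c) * (P * a + (S ^ 2 + P ^ 2) * d)
      - (P * e + S * d) * (S * a + (S ^ 2 + P ^ 2) * c)) = 0 := by
  have hρ : S ^ 2 + P ^ 2 ≠ 0 := by positivity
  -- With E the bracket, u = P a - S b and v = S a + P b, both E u and E v are combinations
  -- of h₁ and h₂, and (S² + P²) a = P u + S v.
  have key : (S ^ 2 + P ^ 2) * (a * ((P * d + S * c) * (P * a + (S ^ 2 + P ^ 2) * d)
      - (P * e + S * d) * (S * a + (S ^ 2 + P ^ 2) * c))) = 0 := by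
    linear_combination
      (P * (S * P * a - P * (S ^ 2 + P ^ 2) * e) + S * (S ^ 2 * a - P * (S ^ 2 + P ^ 2) * d)) * h₁
      - (P * ((S ^ 2 + P ^ 2) * d + P * a) + S * ((S ^ 2 + P ^ 2) * c + S * a)) * h₂
  exact (mul_eq_zero.mp key).resolve_left hρ

end DualityInvariant

end

open DualityInvariant

/-- In a duality-invariant theory, the Jacobian determinant of (Θ, T²) with respect
to (S, P) vanishes identically. -/
theorem jacobian_vanishes (L : ℝ → ℝ → ℝ) (U : Set (ℝ × ℝ)) (hU : IsOpen U)
    (hL : ContDiffOn ℝ 2 (fun p : ℝ × ℝ => L p.1 p.2) U)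
    (hP : ∀ p ∈ U, p.2 ≠ 0)
    (hSD : ∀ p ∈ U,
      (deriv (fun s => L s p.2) p.1) ^ 2
        - (2 * p.1 / p.2) * deriv (fun s => L s p.2) p.1 * deriv (fun t => L p.1 t) p.2
        - (deriv (fun t => L p.1 t) p.2) ^ 2 = 1)
    (Θ T2 : ℝ → ℝ → ℝ)
    (hΘ : ∀ S P : ℝ, Θ S P =
      4 * (L S P - P * deriv (fun t => L S t) P - S * deriv (fun s => L s P) S))
    (hT2 : ∀ S P : ℝ, T2 S P =
      4 * (S ^ 2 + P ^ 2) * (deriv (fun s => L s P) S) ^ 2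
        + 4 * (L S P - P * deriv (fun t => L S t) P - S * deriv (fun s => L s P) S) ^ 2) :
    ∀ p ∈ U,
      deriv (fun s => Θ s p.2) p.1 * deriv (fun t => T2 p.1 t) p.2
        - deriv (fun t => Θ p.1 t) p.2 * deriv (fun s => T2 s p.2) p.1 = 0 := by
  rintro ⟨S, P⟩ hp
  obtain rfl : Θ = stressTrace L := funext₂ hΘ
  obtain rfl : T2 = stressSq L := funext₂ fun S P => by
    simp only [hT2, stressSq, stressTrace, partial₁, partial₂]; ring
  have hP₀ : P ≠ 0 := hP _ hp
  change jacobian (stressTrace L) (stressSq L) S P = 0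
  rw [jacobian_stressTrace_stressSq hU hL hp,
    jacobian_factor_eq_zero_of_relations hP₀ (selfDuality_partial₁_relation hU hL hp hP₀ hSD)
      (selfDuality_partial₂_relation hU hL hp hP₀ hSD), mul_zero]
end

section
/- Let L : U → ℝ be a C¹ function on a connected open set U ⊆ ℝ², with coordinates (S,P). If the vector field v(S,P) = (S·L_P − P·L_S, S·L_S + P·L_P) vanishes identically on U, then L is constant on U. -/
open Topology Set

/-!
Write `F (S, P) = L S P`. At a point `p ≠ 0` the two components of the vanishing field say that
the gradient of `F` is both orthogonal and parallel to `p`, so it is zero. The derivative of `F` is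
continuous and vanishes on the dense subset `U \ {0}` of `U`, hence on all of `U`, and a function
with zero derivative on a connected open set is constant.
-/

theorem eq_zero_of_dot_eq_zero_of_cross_eq_zero {p : ℝ × ℝ} {a b : ℝ} (hp : p ≠ 0)
    (hcross : p.1 * b - p.2 * a = 0) (hdot : p.1 * a + p.2 * b = 0) : a = 0 ∧ b = 0 := by
  have hnorm : p.1 ^ 2 + p.2 ^ 2 ≠ 0 := by
    contrapose! hp
    have h₁ : p.1 = 0 := by nlinarith [sq_nonneg p.1, sq_nonneg p.2]
    have h₂ : p.2 = 0 := by nlinarith [sq_nonneg p.1, sq_nonneg p.2]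
    exact Prod.ext h₁ h₂
  constructor
  · have h : a * (p.1 ^ 2 + p.2 ^ 2) = 0 := by linear_combination p.1 * hdot - p.2 * hcross
    exact (mul_eq_zero.1 h).resolve_right hnorm
  · have h : b * (p.1 ^ 2 + p.2 ^ 2) = 0 := by linear_combination p.2 * hdot + p.1 * hcross
    exact (mul_eq_zero.1 h).resolve_right hnorm

section Slices

variable {𝕜 : Type*} [NontriviallyNormedField 𝕜] {E : Type*} [NormedAddCommGroup E]
  [NormedSpace 𝕜 E] {f : 𝕜 × 𝕜 → E} {f' : 𝕜 × 𝕜 →L[𝕜] E} {p : 𝕜 × 𝕜}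

theorem HasFDerivAt.hasDerivAt_fst_slice (h : HasFDerivAt f f' p) :
    HasDerivAt (fun s => f (s, p.2)) (f' (1, 0)) p.1 :=
  h.comp_hasDerivAt p.1 ((hasDerivAt_id p.1).prodMk (hasDerivAt_const p.1 p.2))

theorem HasFDerivAt.hasDerivAt_snd_slice (h : HasFDerivAt f f' p) :
    HasDerivAt (fun t => f (p.1, t)) (f' (0, 1)) p.2 :=
  h.comp_hasDerivAt p.2 ((hasDerivAt_const p.2 p.1).prodMk (hasDerivAt_id p.2))

theorem ContinuousLinearMap.eq_zero_of_apply_one_zero_of_apply_zero_one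
    (h₁ : f' (1, 0) = 0) (h₂ : f' (0, 1) = 0) : f' = 0 :=
  ContinuousLinearMap.prod_ext (ContinuousLinearMap.ext_ring (by simpa using h₁))
    (ContinuousLinearMap.ext_ring (by simpa using h₂))

end Slices

/-- The field `v = (S L_P - P L_S, S L_S + P L_P)`, written for `F (S, P) = L S P`. -/
noncomputable def dualityRotationField (F : ℝ × ℝ → ℝ) (p : ℝ × ℝ) : ℝ × ℝ :=
  (p.1 * deriv (fun t => F (p.1, t)) p.2 - p.2 * deriv (fun s => F (s, p.2)) p.1,
    p.1 * deriv (fun s => F (s, p.2)) p.1 + p.2 * deriv (fun t => F (p.1, t)) p.2)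

theorem fderiv_eq_zero_of_dualityRotationField_eq_zero {F : ℝ × ℝ → ℝ} {p : ℝ × ℝ}
    (hF : DifferentiableAt ℝ F p) (hp : p ≠ 0) (hv : dualityRotationField F p = 0) :
    fderiv ℝ F p = 0 := by
  have hS := hF.hasFDerivAt.hasDerivAt_fst_slice.deriv
  have hP := hF.hasFDerivAt.hasDerivAt_snd_slice.deriv
  obtain ⟨hcross, hdot⟩ := Prod.ext_iff.1 hv
  simp only [dualityRotationField, hS, hP, Prod.fst_zero, Prod.snd_zero] at hcross hdot
  obtain ⟨h₁, h₂⟩ := eq_zero_of_dot_eq_zero_of_cross_eq_zero hp hcross hdot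
  exact ContinuousLinearMap.eq_zero_of_apply_one_zero_of_apply_zero_one h₁ h₂

theorem IsOpen.eqOn_of_eqOn_diff_singleton {X Y : Type*} [TopologicalSpace X]
    [TopologicalSpace Y] [T2Space Y] {f g : X → Y} {U : Set X} {a : X} [(𝓝[≠] a).NeBot]
    (hU : IsOpen U) (hf : ContinuousOn f U) (hg : ContinuousOn g U) (h : EqOn f g (U \ {a})) :
    EqOn f g U :=
  h.of_subset_closure hf hg sdiff_subset ((dense_compl_singleton a).open_subset_closure_inter hU)

/-- If the duality-rotation vector field built from a C¹ Lagrangian vanishes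
identically on a connected open set, the Lagrangian is constant there. -/
theorem lagrangian_constant_of_vector_field_zero (L : ℝ → ℝ → ℝ) (U : Set (ℝ × ℝ))
    (hU : IsOpen U) (hconn : IsConnected U)
    (hL : ContDiffOn ℝ 1 (fun p : ℝ × ℝ => L p.1 p.2) U)
    (hv1 : ∀ p ∈ U,
      p.1 * deriv (fun t => L p.1 t) p.2 - p.2 * deriv (fun s => L s p.2) p.1 = 0)
    (hv2 : ∀ p ∈ U,
      p.1 * deriv (fun s => L s p.2) p.1 + p.2 * deriv (fun t => L p.1 t) p.2 = 0) :
    ∀ p ∈ U, ∀ q ∈ U, L p.1 p.2 = L q.1 q.2 := by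
  set F : ℝ × ℝ → ℝ := fun p => L p.1 p.2
  have hdiff : DifferentiableOn ℝ F U := hL.differentiableOn one_ne_zero
  have hpunctured : EqOn (fderiv ℝ F) 0 (U \ {0}) := fun p ⟨hp, hp0⟩ =>
    fderiv_eq_zero_of_dualityRotationField_eq_zero (hdiff.differentiableAt (hU.mem_nhds hp)) hp0
      (Prod.ext (hv1 p hp) (hv2 p hp))
  have hzero : EqOn (fderiv ℝ F) 0 U :=
    hU.eqOn_of_eqOn_diff_singleton (hL.continuousOn_fderiv_of_isOpen hU le_rfl)
      continuousOn_const hpunctured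
  exact fun p hp q hq => hU.is_const_of_fderiv_eq_zero hconn.isPreconnected hdiff hzero hp hq
end

section
/- Let f : ℝ² ∖ {0} → ℝ be a C¹ function satisfying S·f_P(S,P) = P·f_S(S,P) for all (S,P) ≠ (0,0). Then for every point x₀ ∈ ℝ² ∖ {0} there exists an open neighbourhood V of x₀ and a function h of one real variable such that f(S,P) = h(S² + P²) for all (S,P) ∈ V. -/
/-!
Along the circle `θ ↦ (r cos θ, r sin θ)` the velocity is the rotation field `(-P, S)`, and
`S f_P = P f_S` says exactly that the derivative of `f` in that direction vanishes. Hence `f` is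
constant on every circle centred at the origin, so `f (S, P) = f (√(S² + P²), 0)` on all of
`ℝ² ∖ {0}`.
-/

open Real

section Slices

variable {E : Type*} [NormedAddCommGroup E] [NormedSpace ℝ E] {F : ℝ × ℝ → E}
  {L : ℝ × ℝ →L[ℝ] E} {q : ℝ × ℝ}

theorem HasFDerivAt.hasDerivAt_slice_fst (h : HasFDerivAt F L q) :
    HasDerivAt (fun s => F (s, q.2)) (L (1, 0)) q.1 :=
  h.comp_hasDerivAt q.1 ((hasDerivAt_id _).prodMk (hasDerivAt_const _ _))

theorem HasFDerivAt.hasDerivAt_slice_snd (h : HasFDerivAt F L q) :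
    HasDerivAt (fun t => F (q.1, t)) (L (0, 1)) q.2 :=
  h.comp_hasDerivAt q.2 ((hasDerivAt_const _ _).prodMk (hasDerivAt_id _))

end Slices

theorem ContinuousLinearMap.apply_prod_eq {E : Type*} [AddCommGroup E] [Module ℝ E]
    [TopologicalSpace E] (L : ℝ × ℝ →L[ℝ] E) (a b : ℝ) :
    L (a, b) = a • L (1, 0) + b • L (0, 1) := by
  rw [← map_smul, ← map_smul, ← map_add]
  simp

theorem hasDerivAt_circle (r θ : ℝ) :
    HasDerivAt (fun θ => (r * cos θ, r * sin θ)) (-(r * sin θ), r * cos θ) θ := by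
  simpa using ((hasDerivAt_cos θ).const_mul r).prodMk ((hasDerivAt_sin θ).const_mul r)

theorem exists_eq_sqrt_mul_cos_sin (p : ℝ × ℝ) :
    ∃ θ, p = (√(p.1 ^ 2 + p.2 ^ 2) * cos θ, √(p.1 ^ 2 + p.2 ^ 2) * sin θ) := by
  set z : ℂ := ⟨p.1, p.2⟩
  have hz : ‖z‖ = √(p.1 ^ 2 + p.2 ^ 2) := by
    rw [Complex.norm_def, Complex.normSq_mk]
    ring_nf
  refine ⟨z.arg, ?_⟩
  rw [← hz, Complex.norm_mul_cos_arg, Complex.norm_mul_sin_arg]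

theorem eq_apply_sqrt_of_rotation_invariant {F : ℝ × ℝ → ℝ}
    (hF : ∀ q ≠ 0, DifferentiableAt ℝ F q)
    (hrot : ∀ q ≠ 0, fderiv ℝ F q (-q.2, q.1) = 0) {p : ℝ × ℝ} (hp : p ≠ 0) :
    F p = F (√(p.1 ^ 2 + p.2 ^ 2), 0) := by
  set r := √(p.1 ^ 2 + p.2 ^ 2)
  have hr : r ≠ 0 := by
    refine (sqrt_pos.mpr ?_).ne'
    contrapose! hp
    ext <;> simp only [Prod.fst_zero, Prod.snd_zero] <;> nlinarith [sq_nonneg p.1, sq_nonneg p.2]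
  have hcircle_ne : ∀ θ, (r * cos θ, r * sin θ) ≠ 0 := by
    intro θ h
    have hcos : cos θ = 0 := (mul_eq_zero.mp (congrArg Prod.fst h)).resolve_left hr
    have hsin : sin θ = 0 := (mul_eq_zero.mp (congrArg Prod.snd h)).resolve_left hr
    simpa [hcos, hsin] using sin_sq_add_cos_sq θ
  have hderiv : ∀ θ, HasDerivAt (fun θ => F (r * cos θ, r * sin θ)) 0 θ := fun θ => by
    have h := (hF _ (hcircle_ne θ)).hasFDerivAt.comp_hasDerivAt θ (hasDerivAt_circle r θ)
    rwa [hrot _ (hcircle_ne θ)] at h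
  obtain ⟨θ, hθ⟩ := exists_eq_sqrt_mul_cos_sin p
  have hconst := is_const_of_deriv_eq_zero (fun θ => (hderiv θ).differentiableAt)
    (fun θ => (hderiv θ).deriv) θ 0
  rw [hθ]
  simpa using hconst

/-- A C¹ function on ℝ² ∖ {0} annihilated by the rotation vector field is locally
a function of S² + P². -/
theorem rotation_invariant_is_radial (f : ℝ → ℝ → ℝ)
    (hf : ContDiffOn ℝ 1 (fun p : ℝ × ℝ => f p.1 p.2) {p : ℝ × ℝ | p ≠ 0})
    (hrot : ∀ p : ℝ × ℝ, p ≠ 0 →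
      p.1 * deriv (fun t => f p.1 t) p.2 = p.2 * deriv (fun s => f s p.2) p.1) :
    ∀ x₀ : ℝ × ℝ, x₀ ≠ 0 → ∃ V : Set (ℝ × ℝ), IsOpen V ∧ x₀ ∈ V ∧
      ∃ h : ℝ → ℝ, ∀ p ∈ V, f p.1 p.2 = h (p.1 ^ 2 + p.2 ^ 2) := by
  intro x₀ hx₀
  have hdiff : ∀ q : ℝ × ℝ, q ≠ 0 → DifferentiableAt ℝ (fun p : ℝ × ℝ => f p.1 p.2) q :=
    fun q hq => (hf.differentiableOn one_ne_zero).differentiableAt (isOpen_ne.mem_nhds hq)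
  have hrot_fderiv : ∀ q : ℝ × ℝ, q ≠ 0 → fderiv ℝ (fun p : ℝ × ℝ => f p.1 p.2) q (-q.2, q.1) = 0 := by
    intro q hq
    have hF := (hdiff q hq).hasFDerivAt
    have h := hrot q hq
    rw [hF.hasDerivAt_slice_fst.deriv, hF.hasDerivAt_slice_snd.deriv] at h
    rw [ContinuousLinearMap.apply_prod_eq, smul_eq_mul, smul_eq_mul]
    linarith
  exact ⟨{p | p ≠ 0}, isOpen_ne, hx₀, fun u => f √u 0,
    fun p hp => eq_apply_sqrt_of_rotation_invariant hdiff hrot_fderiv hp⟩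
end

section
/- Fix γ ∈ ℝ and define L(S,P) = cosh(γ)·S + sinh(γ)·√(S² + P²) on the set {(S,P) ∈ ℝ² : P ≠ 0}. Then L satisfies the self-duality equation L_S² − (2S/P)·L_S·L_P − L_P² = 1 at every point of this set. -/
/-! The partial derivatives are `L_S = cosh γ + sinh γ · S / r` and `L_P = sinh γ · P / r` with
`r = √(S² + P²)`. In the self-duality expression the cross terms `± 2 cosh γ sinh γ · S / r` cancel
and the remaining terms collapse to `cosh² γ - sinh² γ · (S² + P²) / r² = cosh² γ - sinh² γ = 1`. -/

open Real

noncomputable def modmaxLagrangian (γ S P : ℝ) : ℝ :=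
  cosh γ * S + sinh γ * √(S ^ 2 + P ^ 2)

theorem hasDerivAt_sqrt_sq_add {x c : ℝ} (h : x ^ 2 + c ≠ 0) :
    HasDerivAt (fun y => √(y ^ 2 + c)) (x / √(x ^ 2 + c)) x := by
  have hsq : HasDerivAt (fun y : ℝ => y ^ 2 + c) (2 * x) x := by
    simpa using (hasDerivAt_pow 2 x).add_const c
  convert hsq.sqrt h using 1
  field_simp

theorem hasDerivAt_modmaxLagrangian_left (γ : ℝ) {S P : ℝ} (h : S ^ 2 + P ^ 2 ≠ 0) :
    HasDerivAt (fun s => modmaxLagrangian γ s P)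
      (cosh γ + sinh γ * (S / √(S ^ 2 + P ^ 2))) S := by
  simpa [modmaxLagrangian] using ((hasDerivAt_id' S).const_mul (cosh γ)).fun_add
    ((hasDerivAt_sqrt_sq_add h).const_mul (sinh γ))

theorem hasDerivAt_modmaxLagrangian_right (γ : ℝ) {S P : ℝ} (h : S ^ 2 + P ^ 2 ≠ 0) :
    HasDerivAt (fun t => modmaxLagrangian γ S t) (sinh γ * (P / √(S ^ 2 + P ^ 2))) P := by
  rw [add_comm] at h ⊢
  simpa [modmaxLagrangian, add_comm] using
    ((hasDerivAt_sqrt_sq_add h).const_mul (sinh γ)).const_add (cosh γ * S)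

theorem self_duality_expression_eq_sq_sub_sq {a b S P r : ℝ} (hP : P ≠ 0) (hr0 : r ≠ 0)
    (hr : r ^ 2 = S ^ 2 + P ^ 2) :
    (a + b * (S / r)) ^ 2 - 2 * S / P * (a + b * (S / r)) * (b * (P / r)) - (b * (P / r)) ^ 2
      = a ^ 2 - b ^ 2 := by
  field_simp
  linear_combination b ^ 2 * hr

/-- The ModMax Lagrangian satisfies the self-duality equation wherever P ≠ 0. -/
theorem modmax_self_dual (γ : ℝ) (L : ℝ → ℝ → ℝ)
    (hL : ∀ S P : ℝ, L S P = Real.cosh γ * S + Real.sinh γ * Real.sqrt (S ^ 2 + P ^ 2)) :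
    ∀ S P : ℝ, P ≠ 0 →
      (deriv (fun s => L s P) S) ^ 2
        - (2 * S / P) * deriv (fun s => L s P) S * deriv (fun t => L S t) P
        - (deriv (fun t => L S t) P) ^ 2 = 1 := by
  intro S P hP
  obtain rfl : L = modmaxLagrangian γ := funext₂ hL
  have hpos : 0 < S ^ 2 + P ^ 2 := by positivity
  rw [(hasDerivAt_modmaxLagrangian_left γ hpos.ne').deriv,
    (hasDerivAt_modmaxLagrangian_right γ hpos.ne').deriv,
    self_duality_expression_eq_sq_sub_sq hP (sqrt_pos.mpr hpos).ne' (sq_sqrt hpos.le),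
    cosh_sq_sub_sinh_sq]
end

section
/- Fix λ > 0 and define L(S,P) = (1/λ)·(1 − √(1 − 2λS − λ²P²)) on the open set of (S,P) ∈ ℝ² where P ≠ 0 and 1 − 2λS − λ²P² > 0. Then L satisfies the self-duality equation L_S² − (2S/P)·L_S·L_P − L_P² = 1 at every point of this set. -/
/-!
Writing `Q = 1 - 2λS - λ²P²`, the chain rule gives `L_S = 1/√Q` and `L_P = λP/√Q`, so
`L_S² - (2S/P) L_S L_P - L_P² = (1 - 2λS - λ²P²)/Q = 1`.
-/

open Real

section BornInfeld

variable {lam S P : ℝ}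

theorem hasDerivAt_const_mul_one_sub_sqrt {f : ℝ → ℝ} {f' x : ℝ} (c : ℝ)
    (hf : HasDerivAt f f' x) (hx : f x ≠ 0) :
    HasDerivAt (fun y => c * (1 - √(f y))) (-(c * f') / (2 * √(f x))) x :=
  (((hf.sqrt hx).const_sub 1).const_mul c).congr_deriv (by ring)

theorem deriv_bornInfeld_fst (hlam : lam ≠ 0) (hQ : 1 - 2 * lam * S - lam ^ 2 * P ^ 2 ≠ 0) :
    deriv (fun s => (1 / lam) * (1 - √(1 - 2 * lam * s - lam ^ 2 * P ^ 2))) S =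
      1 / √(1 - 2 * lam * S - lam ^ 2 * P ^ 2) := by
  have hQ' : HasDerivAt (fun s => 1 - 2 * lam * s - lam ^ 2 * P ^ 2) (-(2 * lam)) S := by
    simpa using (((hasDerivAt_id S).const_mul (2 * lam)).const_sub 1).sub_const (lam ^ 2 * P ^ 2)
  rw [(hasDerivAt_const_mul_one_sub_sqrt (1 / lam) hQ' hQ).deriv]
  field_simp

theorem deriv_bornInfeld_snd (hlam : lam ≠ 0) (hQ : 1 - 2 * lam * S - lam ^ 2 * P ^ 2 ≠ 0) :
    deriv (fun t => (1 / lam) * (1 - √(1 - 2 * lam * S - lam ^ 2 * t ^ 2))) P =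
      lam * P / √(1 - 2 * lam * S - lam ^ 2 * P ^ 2) := by
  have hQ' : HasDerivAt (fun t => 1 - 2 * lam * S - lam ^ 2 * t ^ 2) (-(lam ^ 2 * (2 * P))) P := by
    simpa using ((hasDerivAt_pow 2 P).const_mul (lam ^ 2)).const_sub (1 - 2 * lam * S)
  rw [(hasDerivAt_const_mul_one_sub_sqrt (1 / lam) hQ' hQ).deriv]
  field_simp

theorem self_duality_of_sq_eq {r : ℝ} (hP : P ≠ 0) (hr : r ≠ 0)
    (hr2 : r ^ 2 = 1 - 2 * lam * S - lam ^ 2 * P ^ 2) :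
    (1 / r) ^ 2 - (2 * S / P) * (1 / r) * (lam * P / r) - (lam * P / r) ^ 2 = 1 := by
  field_simp
  linear_combination -hr2

end BornInfeld

/-- The Born-Infeld Lagrangian satisfies the self-duality equation on its domain. -/
theorem born_infeld_self_dual (lam : ℝ) (hlam : 0 < lam) (L : ℝ → ℝ → ℝ)
    (hL : ∀ S P : ℝ, L S P =
      (1 / lam) * (1 - Real.sqrt (1 - 2 * lam * S - lam ^ 2 * P ^ 2))) :
    ∀ S P : ℝ, P ≠ 0 → 1 - 2 * lam * S - lam ^ 2 * P ^ 2 > 0 →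
      (deriv (fun s => L s P) S) ^ 2
        - (2 * S / P) * deriv (fun s => L s P) S * deriv (fun t => L S t) P
        - (deriv (fun t => L S t) P) ^ 2 = 1 := by
  intro S P hP hQ
  obtain rfl : L = fun S P => (1 / lam) * (1 - √(1 - 2 * lam * S - lam ^ 2 * P ^ 2)) :=
    funext₂ hL
  rw [deriv_bornInfeld_fst hlam.ne' hQ.ne', deriv_bornInfeld_snd hlam.ne' hQ.ne']
  exact self_duality_of_sq_eq hP (sqrt_pos.mpr hQ).ne' (sq_sqrt hQ.le)
end

section
/- Let v : ℝ → ℝ be C² with v'(s) ≠ 0 for all s, and let s : U → ℝ be a C¹ function on an open set U ⊆ ℝ² (coordinates (p,q)) satisfying q = s(p,q) + p / v'(s(p,q))² on U. Define L(p,q) = v(s(p,q)) + 2p / v'(s(p,q)). Then L satisfies the Courant-Hilbert equation L_p · L_q = 1 at every point of U where 1 − 2p·v''(s)/v'(s)³ ≠ 0. -/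
/-!
Restrict everything to a curve `t ↦ (P t, Q t)` in `U` and write `σ = s ∘ (P, Q)`,
`A = v'(σ)`, `B = v''(σ)`. Differentiating the implicit relation gives
`Q' = σ' (1 - 2 P B / A³) + P' / A²`, and differentiating `L` gives
`A σ' (1 - 2 P B / A³) + 2 P' / A`; eliminating `σ'` leaves `(L ∘ (P, Q))' = A Q' + P' / A`.
Along the `p`-direction this is `L_p = 1 / v'(s)`, along the `q`-direction `L_q = v'(s)`.
-/

open Filter Topology

theorem hasDerivAt_add_div_deriv_sq_comp {v σ P : ℝ → ℝ} {σ' P' B τ : ℝ}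
    (hσ : HasDerivAt σ σ' τ) (hP : HasDerivAt P P' τ)
    (hv' : HasDerivAt (deriv v) B (σ τ)) (hA : deriv v (σ τ) ≠ 0) :
    HasDerivAt (fun t => σ t + P t / deriv v (σ t) ^ 2)
      (σ' + (P' * deriv v (σ τ) - 2 * P τ * B * σ') / deriv v (σ τ) ^ 3) τ := by
  refine (hσ.fun_add (hP.fun_div ((hv'.comp τ hσ).fun_pow 2) (pow_ne_zero 2 hA))).congr_deriv ?_
  simp only [Function.comp_apply]
  field_simp
  ring

theorem hasDerivAt_add_two_mul_div_deriv_comp {v σ P Q : ℝ → ℝ} {σ' P' Q' τ : ℝ}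
    (hσ : HasDerivAt σ σ' τ) (hP : HasDerivAt P P' τ) (hQ : HasDerivAt Q Q' τ)
    (hv : DifferentiableAt ℝ v (σ τ)) (hv' : DifferentiableAt ℝ (deriv v) (σ τ))
    (hA : deriv v (σ τ) ≠ 0) (hrel : Q =ᶠ[𝓝 τ] fun t => σ t + P t / deriv v (σ t) ^ 2) :
    HasDerivAt (fun t => v (σ t) + 2 * P t / deriv v (σ t))
      (deriv v (σ τ) * Q' + P' / deriv v (σ τ)) τ := by
  have hQ' : Q' = σ' + (P' * deriv v (σ τ) - 2 * P τ * deriv (deriv v) (σ τ) * σ') /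
      deriv v (σ τ) ^ 3 :=
    hQ.unique <| (hasDerivAt_add_div_deriv_sq_comp hσ hP hv'.hasDerivAt hA).congr_of_eventuallyEq
      hrel
  refine ((hv.hasDerivAt.comp τ hσ).fun_add
    ((hP.const_mul 2).fun_div (hv'.hasDerivAt.comp τ hσ) hA)).congr_deriv ?_
  rw [hQ', Function.comp_apply]
  field_simp
  ring

theorem hasDerivAt_courantHilbert_comp_curve {v : ℝ → ℝ} (hv : ContDiff ℝ 2 v)
    (hv' : ∀ t : ℝ, deriv v t ≠ 0) {U : Set (ℝ × ℝ)} (hU : IsOpen U) {s : ℝ → ℝ → ℝ}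
    (hs : ContDiffOn ℝ 1 (fun x : ℝ × ℝ => s x.1 x.2) U)
    (hrel : ∀ x ∈ U, x.2 = s x.1 x.2 + x.1 / (deriv v (s x.1 x.2)) ^ 2)
    {γ : ℝ → ℝ × ℝ} {γ' : ℝ × ℝ} {τ : ℝ} (hγ : HasDerivAt γ γ' τ) (hτ : γ τ ∈ U) :
    HasDerivAt (fun t => v (s (γ t).1 (γ t).2) + 2 * (γ t).1 / deriv v (s (γ t).1 (γ t).2))
      (deriv v (s (γ τ).1 (γ τ).2) * γ'.2 + γ'.1 / deriv v (s (γ τ).1 (γ τ).2)) τ := by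
  have hσ : DifferentiableAt ℝ (fun t => s (γ t).1 (γ t).2) τ :=
    ((hs.differentiableOn one_ne_zero).differentiableAt (hU.mem_nhds hτ)).comp τ
      hγ.differentiableAt
  exact hasDerivAt_add_two_mul_div_deriv_comp hσ.hasDerivAt hγ.fst hγ.snd
    (hv.differentiable two_ne_zero _) (hv.differentiable_deriv_two _) (hv' _)
    ((hγ.continuousAt.eventually_mem (hU.mem_nhds hτ)).mono fun t ht => hrel (γ t) ht)

/-- The general solution of the Courant-Hilbert equation L_p · L_q = 1, built from a
function of one variable v(s) via the implicit relation q = s + p / v'(s)². -/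
theorem courant_hilbert_solution (v : ℝ → ℝ) (hv : ContDiff ℝ 2 v)
    (hv' : ∀ t : ℝ, deriv v t ≠ 0)
    (U : Set (ℝ × ℝ)) (hU : IsOpen U)
    (s : ℝ → ℝ → ℝ) (hs : ContDiffOn ℝ 1 (fun x : ℝ × ℝ => s x.1 x.2) U)
    (hrel : ∀ x ∈ U, x.2 = s x.1 x.2 + x.1 / (deriv v (s x.1 x.2)) ^ 2)
    (L : ℝ → ℝ → ℝ)
    (hL : ∀ p q : ℝ, L p q = v (s p q) + 2 * p / deriv v (s p q)) :
    ∀ x ∈ U,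
      1 - 2 * x.1 * deriv (deriv v) (s x.1 x.2) / (deriv v (s x.1 x.2)) ^ 3 ≠ 0 →
      deriv (fun p => L p x.2) x.1 * deriv (fun q => L x.1 q) x.2 = 1 := by
  rintro ⟨p, q⟩ hx -
  obtain rfl : L = fun p q => v (s p q) + 2 * p / deriv v (s p q) := funext₂ hL
  have hLp := hasDerivAt_courantHilbert_comp_curve hv hv' hU hs hrel
    ((hasDerivAt_id' p).prodMk (hasDerivAt_const p q)) hx
  have hLq := hasDerivAt_courantHilbert_comp_curve hv hv' hU hs hrel
    ((hasDerivAt_const q p).prodMk (hasDerivAt_id' q)) hx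
  dsimp only at hLp hLq ⊢
  rw [hLp.deriv, hLq.deriv]
  simp [hv']
end

section
/- Define H(b,λ) = (1/λ)·(2b/(b−1)) for λ > 0 and b ∈ ℝ with b ≠ 1. Then H satisfies the flow equation ∂H/∂λ = −(1/2)·H² + (1/2)·b·(∂H/∂b)²·(1−b)² at every such point. -/
/-- The Born-Infeld μ-frame interaction function H(b,λ) = (1/λ)(2b/(b-1)) satisfies
the TT̄ flow equation. -/
theorem born_infeld_TTbar_flow (H : ℝ → ℝ → ℝ)
    (hH : ∀ b l : ℝ, H b l = (1 / l) * (2 * b / (b - 1))) :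
    ∀ b l : ℝ, 0 < l → b ≠ 1 →
      deriv (fun l' => H b l') l =
        -(1 / 2) * (H b l) ^ 2
          + (1 / 2) * b * (deriv (fun b' => H b' l) b) ^ 2 * (1 - b) ^ 2 := by
  intro b l hl hb
  have hl0 : l ≠ 0 := ne_of_gt hl
  have hb0 : b - 1 ≠ 0 := sub_ne_zero.mpr hb
  have h1 : deriv (fun l' => H b l') l = -(2 * b / (b - 1)) / l ^ 2 := by
    have : (fun l' => H b l') = fun l' => (2 * b / (b - 1)) * l'⁻¹ := by
      funext l'; rw [hH]; ring
    rw [this]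
    rw [deriv_const_mul _ (differentiableAt_inv hl0), deriv_inv]
    field_simp
  have h2 : deriv (fun b' => H b' l) b = -2 / (l * (b - 1) ^ 2) := by
    have hd : HasDerivAt (fun b' => (1 / l) * (2 * b' / (b' - 1)))
        ((1 / l) * ((2 * 1 * (b - 1) - 2 * b * 1) / (b - 1) ^ 2)) b := by
      have hq : HasDerivAt (fun b' : ℝ => 2 * b' / (b' - 1))
          ((2 * 1 * (b - 1) - 2 * b * 1) / (b - 1) ^ 2) b := by
        exact ((hasDerivAt_id b).const_mul 2).div ((hasDerivAt_id b).sub_const 1) hb0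
      exact hq.const_mul (1 / l)
    have : (fun b' => H b' l) = fun b' => (1 / l) * (2 * b' / (b' - 1)) := by
      funext b'; rw [hH]
    rw [this, hd.deriv]
    field_simp; ring
  rw [h1, h2, hH]
  field_simp
  ring
end

section
/- Fix γ ∈ ℝ and define H(b,λ) = (1/λ)·(b − 1 + (1+b)·cosh(γ) + 2√b·sinh(γ))/(b−1) for λ > 0, b > 0, b ≠ 1. Then H satisfies the TT̄ flow equation ∂H/∂λ = −(1/2)·H² + (1/2)·b·(∂H/∂b)²·(1−b)² at every such point. -/
/-!
Writing `H b λ = F b / λ`, the flow equation is equivalent to the `λ`-free equation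
`b (1 - b)² F'(b)² = F(b)² - 2 F(b)`. With `s = √b` one finds
`F'(b) = -(2 s cosh γ + (1 + b) sinh γ) / (s (b - 1)²)`, so this equation says that the pairs
`((1 + b) cosh γ + 2 s sinh γ, 2 s cosh γ + (1 + b) sinh γ)` and `(1 + b, 2 s)` have the same
Minkowski norm `(1 - b)²`: the first is the hyperbolic rotation of the second by the angle `γ`.
-/

open Real

theorem sq_sub_sq_of_hyperbolic_rotation (γ x y : ℝ) :
    (x * cosh γ + y * sinh γ) ^ 2 - (y * cosh γ + x * sinh γ) ^ 2 = x ^ 2 - y ^ 2 := by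
  linear_combination (x ^ 2 - y ^ 2) * cosh_sq_sub_sinh_sq γ

noncomputable def gammaBIProfile (γ b : ℝ) : ℝ :=
  (b - 1 + (1 + b) * cosh γ + 2 * √b * sinh γ) / (b - 1)

theorem hasDerivAt_gammaBIProfile (γ : ℝ) {b : ℝ} (hb : 0 < b) (hb1 : b ≠ 1) :
    HasDerivAt (gammaBIProfile γ)
      (-(2 * √b * cosh γ + (1 + b) * sinh γ) / (√b * (b - 1) ^ 2)) b := by
  have hsqrt : √b ^ 2 = b := sq_sqrt hb.le
  have hb1' : b - 1 ≠ 0 := sub_ne_zero.mpr hb1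
  have hid := hasDerivAt_id' b
  have hnum : HasDerivAt (fun b' => b' - 1 + (1 + b') * cosh γ + 2 * √b' * sinh γ)
      (1 + 1 * cosh γ + 2 * (1 / (2 * √b)) * sinh γ) b :=
    ((hid.sub_const 1).add ((hid.const_add 1).mul_const (cosh γ))).add
      (((hasDerivAt_sqrt hb.ne').const_mul 2).mul_const (sinh γ))
  refine (hnum.div (hid.sub_const 1) hb1').congr_deriv ?_
  field_simp
  linear_combination (-2 * sinh γ) * hsqrt

theorem gammaBIProfile_sq_sub_two_mul (γ : ℝ) {b : ℝ} (hb : 0 < b) (hb1 : b ≠ 1) :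
    b * (1 - b) ^ 2 * deriv (gammaBIProfile γ) b ^ 2
      = gammaBIProfile γ b ^ 2 - 2 * gammaBIProfile γ b := by
  rw [(hasDerivAt_gammaBIProfile γ hb hb1).deriv, gammaBIProfile]
  obtain ⟨s, hs, rfl⟩ : ∃ s, 0 < s ∧ b = s ^ 2 := ⟨√b, sqrt_pos.mpr hb, (sq_sqrt hb.le).symm⟩
  have hs1 : s ^ 2 - 1 ≠ 0 := sub_ne_zero.mpr hb1
  rw [sqrt_sq hs.le]
  field_simp
  linear_combination -(s ^ 2 - 1) ^ 2 * sq_sub_sq_of_hyperbolic_rotation γ (1 + s ^ 2) (2 * s)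

theorem ttbar_flow_div_of_sq_sub_two_mul {F : ℝ → ℝ} {b l : ℝ} (hl : l ≠ 0)
    (hF_eq : b * (1 - b) ^ 2 * deriv F b ^ 2 = F b ^ 2 - 2 * F b) :
    deriv (fun l' => F b / l') l =
      -(1 / 2) * (F b / l) ^ 2 + (1 / 2) * b * (deriv (fun b' => F b' / l) b) ^ 2 * (1 - b) ^ 2 := by
  have hderiv_l : deriv (fun l' => F b / l') l = -(F b / l ^ 2) := by
    simp [neg_div]
  rw [hderiv_l, deriv_div_const]
  field_simp
  linear_combination -hF_eq

/-- The γBI (ModMax-Born-Infeld) μ-frame interaction function satisfies the TT̄ flow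
equation in λ. -/
theorem gammaBI_TTbar_flow (γ : ℝ) (H : ℝ → ℝ → ℝ)
    (hH : ∀ b l : ℝ, H b l =
      (1 / l) * ((b - 1 + (1 + b) * Real.cosh γ + 2 * Real.sqrt b * Real.sinh γ) / (b - 1))) :
    ∀ b l : ℝ, 0 < l → 0 < b → b ≠ 1 →
      deriv (fun l' => H b l') l =
        -(1 / 2) * (H b l) ^ 2
          + (1 / 2) * b * (deriv (fun b' => H b' l) b) ^ 2 * (1 - b) ^ 2 := by
  intro b l hl hb hb1
  obtain rfl : H = fun b l => gammaBIProfile γ b / l := by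
    ext b l
    rw [hH, gammaBIProfile, one_div_mul_eq_div]
  exact ttbar_flow_div_of_sq_sub_two_mul hl.ne' (gammaBIProfile_sq_sub_two_mul γ hb hb1)
end

section
/- Fix λ > 0 and define H(b,γ) = (1/λ)·(b − 1 + (1+b)·cosh(γ) + 2√b·sinh(γ))/(b−1) for γ ∈ ℝ, b > 0, b ≠ 1. Then H satisfies the root-TT̄ flow equation ∂H/∂γ = √b·(∂H/∂b)·(1−b) at every such point. -/
/-- The γBI (ModMax-Born-Infeld) μ-frame interaction function satisfies the
root-TT̄ flow equation in γ. -/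
theorem gammaBI_rootTTbar_flow (lam : ℝ) (hlam : 0 < lam) (H : ℝ → ℝ → ℝ)
    (hH : ∀ b γ : ℝ, H b γ =
      (1 / lam) * ((b - 1 + (1 + b) * Real.cosh γ + 2 * Real.sqrt b * Real.sinh γ) / (b - 1))) :
    ∀ b γ : ℝ, 0 < b → b ≠ 1 →
      deriv (fun g => H b g) γ = Real.sqrt b * deriv (fun b' => H b' γ) b * (1 - b) := by
  intro b γ hb hb1
  have hbne : b - 1 ≠ 0 := sub_ne_zero.mpr hb1
  have hsq : Real.sqrt b * Real.sqrt b = b := Real.mul_self_sqrt hb.le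
  have hsqpos : 0 < Real.sqrt b := Real.sqrt_pos.mpr hb
  -- derivative in γ
  have hγ : HasDerivAt (fun g => H b g)
      ((1 / lam) * ((0 + (1 + b) * Real.sinh γ + 2 * Real.sqrt b * Real.cosh γ) / (b - 1))) γ := by
    have : HasDerivAt (fun g : ℝ =>
        (1 / lam) * ((b - 1 + (1 + b) * Real.cosh g + 2 * Real.sqrt b * Real.sinh g) / (b - 1)))
        ((1 / lam) * ((0 + (1 + b) * Real.sinh γ + 2 * Real.sqrt b * Real.cosh γ) / (b - 1))) γ := by
      exact ((((hasDerivAt_const γ (b - 1)).add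
        ((Real.hasDerivAt_cosh γ).const_mul (1 + b))).add
        ((Real.hasDerivAt_sinh γ).const_mul (2 * Real.sqrt b))).div_const (b - 1)).const_mul (1 / lam)
    exact this.congr_of_eventuallyEq (Filter.Eventually.of_forall fun g => (hH b g))
  -- derivative in b
  set N' : ℝ := 1 + 1 * Real.cosh γ + 2 * (1 / (2 * Real.sqrt b)) * Real.sinh γ with hN'
  have hb' : HasDerivAt (fun b' => H b' γ)
      ((1 / lam) * ((N' * (b - 1) -
        (b - 1 + (1 + b) * Real.cosh γ + 2 * Real.sqrt b * Real.sinh γ) * 1) / (b - 1) ^ 2)) b := by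
    have hnum : HasDerivAt (fun b' : ℝ =>
        b' - 1 + (1 + b') * Real.cosh γ + 2 * Real.sqrt b' * Real.sinh γ) N' b := by
      have h1 : HasDerivAt (fun b' : ℝ => b' - 1) 1 b := (hasDerivAt_id b).sub_const 1
      have h2 : HasDerivAt (fun b' : ℝ => (1 + b') * Real.cosh γ) (1 * Real.cosh γ) b :=
        ((hasDerivAt_id b).const_add 1).mul_const _
      have h3 : HasDerivAt (fun b' : ℝ => 2 * Real.sqrt b' * Real.sinh γ)
          (2 * (1 / (2 * Real.sqrt b)) * Real.sinh γ) b :=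
        (((Real.hasDerivAt_sqrt hb.ne').const_mul 2).mul_const _)
      exact (h1.add h2).add h3
    have hden : HasDerivAt (fun b' : ℝ => b' - 1) 1 b := (hasDerivAt_id b).sub_const 1
    have := (hnum.div hden hbne).const_mul (1 / lam)
    exact this.congr_of_eventuallyEq (Filter.Eventually.of_forall fun b' => (hH b' γ))
  rw [hγ.deriv, hb'.deriv, hN']
  have hlamne : lam ≠ 0 := hlam.ne'
  field_simp
  obtain ⟨s, hs, hssq⟩ : ∃ s, Real.sqrt b = s ∧ s * s = b := ⟨_, rfl, hsq⟩
  rw [hs]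
  subst hssq
  ring
end

section
/- Define B(b,γ) = ((1+b)·cosh(γ) + 2√b·sinh(γ))/(1−b) for b > 0, b ≠ 1, γ ∈ ℝ. Then B satisfies ∂B/∂γ = √b·(1−b)·∂B/∂b. Consequently, for any differentiable g : ℝ → ℝ, the function H(b,γ) = g(B(b,γ)) satisfies the root-TT̄ flow equation ∂H/∂γ = √b·(∂H/∂b)·(1−b). -/
private lemma hasDerivAt_gamma (b γ : ℝ) :
    HasDerivAt (fun g : ℝ => ((1 + b) * Real.cosh g + 2 * Real.sqrt b * Real.sinh g) / (1 - b))
      (((1 + b) * Real.sinh γ + 2 * Real.sqrt b * Real.cosh γ) / (1 - b)) γ := by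
  exact (((Real.hasDerivAt_cosh γ).const_mul (1 + b)).add
    ((Real.hasDerivAt_sinh γ).const_mul (2 * Real.sqrt b))).div_const (1 - b)

private lemma hasDerivAt_b (b γ : ℝ) (hb : 0 < b) (hb1 : b ≠ 1) :
    HasDerivAt (fun b' : ℝ => ((1 + b') * Real.cosh γ + 2 * Real.sqrt b' * Real.sinh γ) / (1 - b'))
      (((Real.cosh γ + 2 * (1 / (2 * Real.sqrt b)) * Real.sinh γ) * (1 - b)
        - ((1 + b) * Real.cosh γ + 2 * Real.sqrt b * Real.sinh γ) * (-1)) / (1 - b) ^ 2) b := by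
  have h1 : (1 : ℝ) - b ≠ 0 := by intro h; apply hb1; linarith
  have hsq : HasDerivAt Real.sqrt (1 / (2 * Real.sqrt b)) b := Real.hasDerivAt_sqrt hb.ne'
  have hnum : HasDerivAt (fun b' : ℝ => (1 + b') * Real.cosh γ + 2 * Real.sqrt b' * Real.sinh γ)
      (Real.cosh γ + 2 * (1 / (2 * Real.sqrt b)) * Real.sinh γ) b := by
    have h2 : HasDerivAt (fun b' : ℝ => (1 + b') * Real.cosh γ) (Real.cosh γ) b := by
      simpa using ((hasDerivAt_id b).const_add 1).mul_const (Real.cosh γ)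
    exact h2.add (((hsq.const_mul 2)).mul_const (Real.sinh γ))
  have hden : HasDerivAt (fun b' : ℝ => 1 - b') (-1 : ℝ) b := by
    simpa using (hasDerivAt_id b).const_sub 1
  exact hnum.div hden h1

/-- The characteristic invariant B of the root-TT̄ flow satisfies
∂_γ B = √b (1-b) ∂_b B, so any function H = g(B) solves the root-TT̄ flow equation. -/
theorem rootTTbar_characteristics (B : ℝ → ℝ → ℝ)
    (hB : ∀ b γ : ℝ, B b γ =
      ((1 + b) * Real.cosh γ + 2 * Real.sqrt b * Real.sinh γ) / (1 - b)) :
    (∀ b γ : ℝ, 0 < b → b ≠ 1 →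
      deriv (fun g => B b g) γ = Real.sqrt b * (1 - b) * deriv (fun b' => B b' γ) b) ∧
    (∀ g : ℝ → ℝ, Differentiable ℝ g → ∀ b γ : ℝ, 0 < b → b ≠ 1 →
      deriv (fun γ' => g (B b γ')) γ
        = Real.sqrt b * deriv (fun b' => g (B b' γ)) b * (1 - b)) := by
  have key : ∀ b γ : ℝ, 0 < b → b ≠ 1 →
      ((1 + b) * Real.sinh γ + 2 * Real.sqrt b * Real.cosh γ) / (1 - b)
      = Real.sqrt b * (1 - b) *
        (((Real.cosh γ + 2 * (1 / (2 * Real.sqrt b)) * Real.sinh γ) * (1 - b)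
        - ((1 + b) * Real.cosh γ + 2 * Real.sqrt b * Real.sinh γ) * (-1)) / (1 - b) ^ 2) := by
    intro b γ hb hb1
    have h1 : (1 : ℝ) - b ≠ 0 := by intro h; apply hb1; linarith
    have hs : Real.sqrt b ≠ 0 := by positivity
    have hss : Real.sqrt b * Real.sqrt b = b := Real.mul_self_sqrt hb.le
    set s := Real.sqrt b with hsdef
    have hbs : b = s * s := hss.symm
    rw [hbs] at h1 ⊢
    field_simp
    ring
  have dG : ∀ b γ : ℝ, HasDerivAt (fun g => B b g)
      (((1 + b) * Real.sinh γ + 2 * Real.sqrt b * Real.cosh γ) / (1 - b)) γ := by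
    intro b γ
    have := hasDerivAt_gamma b γ
    apply this.congr_of_eventuallyEq
    filter_upwards with x using (hB b x)
  have dB : ∀ b γ : ℝ, 0 < b → b ≠ 1 → HasDerivAt (fun b' => B b' γ)
      (((Real.cosh γ + 2 * (1 / (2 * Real.sqrt b)) * Real.sinh γ) * (1 - b)
        - ((1 + b) * Real.cosh γ + 2 * Real.sqrt b * Real.sinh γ) * (-1)) / (1 - b) ^ 2) b := by
    intro b γ hb hb1
    have := hasDerivAt_b b γ hb hb1
    apply this.congr_of_eventuallyEq
    filter_upwards with x using (hB x γ)
  constructor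
  · intro b γ hb hb1
    rw [(dG b γ).deriv, (dB b γ hb hb1).deriv]
    exact key b γ hb hb1
  · intro g hg b γ hb hb1
    have dcomp1 : HasDerivAt (fun γ' => g (B b γ'))
        (deriv g (B b γ) * (((1 + b) * Real.sinh γ + 2 * Real.sqrt b * Real.cosh γ) / (1 - b))) γ :=
      (hg.differentiableAt.hasDerivAt).comp γ (dG b γ)
    have dcomp2 : HasDerivAt (fun b' => g (B b' γ))
        (deriv g (B b γ) * (((Real.cosh γ + 2 * (1 / (2 * Real.sqrt b)) * Real.sinh γ) * (1 - b)
        - ((1 + b) * Real.cosh γ + 2 * Real.sqrt b * Real.sinh γ) * (-1)) / (1 - b) ^ 2)) b :=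
      (hg.differentiableAt.hasDerivAt).comp b (dB b γ hb hb1)
    rw [dcomp1.deriv, dcomp2.deriv, key b γ hb hb1]
    ring
end

section
/- Let L : ℝ × U → ℝ, (λ,S,P) ↦ L(λ,S,P), be C¹ in λ and C¹ in (S,P), on a domain with P ≠ 0, such that the mixed partials ∂_λ∂_S L and ∂_λ∂_P L exist and equal ∂_S∂_λ L and ∂_P∂_λ L. Write O = ∂_λ L and suppose the duality-invariance condition L_S·O_S − (S/P)·(L_P·O_S + L_S·O_P) − L_P·O_P = 0 holds for all λ. If L(0,·,·) satisfies the self-duality equation L_S² − (2S/P)·L_S·L_P − L_P² = 1, then L(λ,·,·) satisfies the same self-duality equation for every λ. -/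
/-!
Fix a point `(S, P)` and set `c = S / P`. Along the flow, `x = L_S` and `y = L_P` move with
velocities `O_S` and `O_P` (the mixed partials commute), and the duality-invariance condition says
precisely that `x O_S - c (y O_S + x O_P) - y O_P`, half the `λ`-derivative of the quadratic form
`x² - 2 c x y - y²`, vanishes. So that form is constant in `λ` and keeps its value `1` from `λ = 0`.
-/

/-- At `x = L_S`, `y = L_P`, `c = S / P` this is `Q + 1` in the notation of the paper. -/
def dualityForm (c x y : ℝ) : ℝ := x ^ 2 - 2 * c * x * y - y ^ 2

theorem hasDerivAt_dualityForm {f g : ℝ → ℝ} {f' g' t : ℝ} (c : ℝ)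
    (hf : HasDerivAt f f' t) (hg : HasDerivAt g g' t) :
    HasDerivAt (fun s => dualityForm c (f s) (g s))
      (2 * (f t * f' - c * (g t * f' + f t * g') - g t * g')) t := by
  have h := ((hf.pow 2).sub (((hasDerivAt_const t (2 * c)).mul hf).mul hg)).sub (hg.pow 2)
  exact h.congr_deriv (by simp only [Pi.mul_apply]; ring)

theorem dualityForm_eq_of_invariant {f g f' g' : ℝ → ℝ} (c : ℝ)
    (hf : ∀ t, HasDerivAt f (f' t) t) (hg : ∀ t, HasDerivAt g (g' t) t)
    (hinv : ∀ t, f t * f' t - c * (g t * f' t + f t * g' t) - g t * g' t = 0) (a b : ℝ) :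
    dualityForm c (f a) (g a) = dualityForm c (f b) (g b) := by
  have hQ : ∀ t, HasDerivAt (fun s => dualityForm c (f s) (g s)) 0 t := fun t => by
    simpa [hinv t] using hasDerivAt_dualityForm c (hf t) (hg t)
  exact is_const_of_deriv_eq_zero (fun t => (hQ t).differentiableAt) (fun t => (hQ t).deriv) a b

theorem flow_preserves_duality_general (L : ℝ → ℝ → ℝ → ℝ) (U : Set (ℝ × ℝ))
    (hmixS : ∀ l : ℝ, ∀ p ∈ U,
      HasDerivAt (fun l' => deriv (fun s => L l' s p.2) p.1)
        (deriv (fun s => deriv (fun l' => L l' s p.2) l) p.1) l)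
    (hmixP : ∀ l : ℝ, ∀ p ∈ U,
      HasDerivAt (fun l' => deriv (fun t => L l' p.1 t) p.2)
        (deriv (fun t => deriv (fun l' => L l' p.1 t) l) p.2) l)
    (hinv : ∀ l : ℝ, ∀ p ∈ U,
      deriv (fun s => L l s p.2) p.1 * deriv (fun s => deriv (fun l' => L l' s p.2) l) p.1
        - (p.1 / p.2) *
            (deriv (fun t => L l p.1 t) p.2 *
                deriv (fun s => deriv (fun l' => L l' s p.2) l) p.1
              + deriv (fun s => L l s p.2) p.1 *
                deriv (fun t => deriv (fun l' => L l' p.1 t) l) p.2)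
        - deriv (fun t => L l p.1 t) p.2 *
            deriv (fun t => deriv (fun l' => L l' p.1 t) l) p.2 = 0)
    (h0 : ∀ p ∈ U,
      (deriv (fun s => L 0 s p.2) p.1) ^ 2
        - (2 * p.1 / p.2) * deriv (fun s => L 0 s p.2) p.1 * deriv (fun t => L 0 p.1 t) p.2
        - (deriv (fun t => L 0 p.1 t) p.2) ^ 2 = 1) :
    ∀ l : ℝ, ∀ p ∈ U,
      (deriv (fun s => L l s p.2) p.1) ^ 2
        - (2 * p.1 / p.2) * deriv (fun s => L l s p.2) p.1 * deriv (fun t => L l p.1 t) p.2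
        - (deriv (fun t => L l p.1 t) p.2) ^ 2 = 1 := by
  intro l p hp
  have hconst := dualityForm_eq_of_invariant (p.1 / p.2)
    (fun l' => hmixS l' p hp) (fun l' => hmixP l' p hp) (fun l' => hinv l' p hp) l 0
  simp only [dualityForm, mul_div_assoc] at hconst h0 ⊢
  rw [hconst]
  exact h0 p hp

/-- A flow driven by a duality-invariant operator O = ∂_λ L preserves the
self-duality equation: if L(0,·,·) is self-dual, so is L(λ,·,·) for every λ. -/
theorem flow_preserves_duality (L : ℝ → ℝ → ℝ → ℝ) (U : Set (ℝ × ℝ))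
    (hP : ∀ p ∈ U, p.2 ≠ 0)
    (hC1lam : ∀ l : ℝ, ∀ p ∈ U, DifferentiableAt ℝ (fun l' => L l' p.1 p.2) l)
    (hC1SP : ∀ l : ℝ, ∀ p ∈ U, DifferentiableAt ℝ (fun x : ℝ × ℝ => L l x.1 x.2) p)
    (hmixS : ∀ l : ℝ, ∀ p ∈ U,
      HasDerivAt (fun l' => deriv (fun s => L l' s p.2) p.1)
        (deriv (fun s => deriv (fun l' => L l' s p.2) l) p.1) l)
    (hmixP : ∀ l : ℝ, ∀ p ∈ U,
      HasDerivAt (fun l' => deriv (fun t => L l' p.1 t) p.2)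
        (deriv (fun t => deriv (fun l' => L l' p.1 t) l) p.2) l)
    (hinv : ∀ l : ℝ, ∀ p ∈ U,
      deriv (fun s => L l s p.2) p.1 * deriv (fun s => deriv (fun l' => L l' s p.2) l) p.1
        - (p.1 / p.2) *
            (deriv (fun t => L l p.1 t) p.2 *
                deriv (fun s => deriv (fun l' => L l' s p.2) l) p.1
              + deriv (fun s => L l s p.2) p.1 *
                deriv (fun t => deriv (fun l' => L l' p.1 t) l) p.2)
        - deriv (fun t => L l p.1 t) p.2 *
            deriv (fun t => deriv (fun l' => L l' p.1 t) l) p.2 = 0)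
    (h0 : ∀ p ∈ U,
      (deriv (fun s => L 0 s p.2) p.1) ^ 2
        - (2 * p.1 / p.2) * deriv (fun s => L 0 s p.2) p.1 * deriv (fun t => L 0 p.1 t) p.2
        - (deriv (fun t => L 0 p.1 t) p.2) ^ 2 = 1) :
    ∀ l : ℝ, ∀ p ∈ U,
      (deriv (fun s => L l s p.2) p.1) ^ 2
        - (2 * p.1 / p.2) * deriv (fun s => L l s p.2) p.1 * deriv (fun t => L l p.1 t) p.2
        - (deriv (fun t => L l p.1 t) p.2) ^ 2 = 1 :=
  flow_preserves_duality_general L U hmixS hmixP hinv h0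
end
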